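/- arXiv:2109.07970 — 10 statements merged into one kernel-verified Lean document; each statement's English description precedes it below -/
import Mathlib

section
/- Let $H \in (-1,1)$, $\rho > 0$, $s \ge 0$, and set $C = -H\cosh(2\rho) + \dfrac{\sinh(2\rho)\cosh(\rho)\,s}{\sqrt{1+\cosh^2(\rho)\,s^2}}$. Then the function $g(r) = H\coth(2r) + C\,\operatorname{csch}(2r)$ satisfies the ordinary differential equation $g'(r) + g(r)\,(\coth(r) + \tanh(r)) - 2H = 0$ for all $r > 0$, and moreover $g(\rho) = \dfrac{\cosh(\rho)\,s}{\sqrt{1+\cosh^2(\rho)\,s^2}}$. -/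
open Real

noncomputable def coth (x : ℝ) : ℝ := Real.cosh x / Real.sinh x

noncomputable def csch (x : ℝ) : ℝ := 1 / Real.sinh x

/-! With `g(r) = H coth(2r) + C csch(2r)`, the ODE reduces, via `coth r + tanh r = 2 coth(2r)`,
`coth' = -csch²`, `csch' = -coth csch` and `coth² - csch² = 1`, to an identity in `coth(2r)` and
`csch(2r)` that holds for every `H` and `C`. The constant `C` is chosen so that
`g(ρ) = (H cosh(2ρ) + C) / sinh(2ρ)` takes the prescribed value. -/

lemma coth_sq_sub_csch_sq {x : ℝ} (hx : x ≠ 0) : coth x ^ 2 - csch x ^ 2 = 1 := by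
  have hsinh : Real.sinh x ≠ 0 := Real.sinh_ne_zero.2 hx
  simp only [coth, csch]
  field_simp
  linarith [Real.cosh_sq_sub_sinh_sq x]

lemma coth_add_tanh (x : ℝ) : coth x + Real.tanh x = 2 * coth (2 * x) := by
  rcases eq_or_ne x 0 with rfl | hx
  · simp [coth]
  have hsinh : Real.sinh x ≠ 0 := Real.sinh_ne_zero.2 hx
  have hcosh : Real.cosh x ≠ 0 := (Real.cosh_pos x).ne'
  simp only [coth, Real.tanh_eq_sinh_div_cosh, Real.sinh_two_mul, Real.cosh_two_mul]
  field_simp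

lemma hasDerivAt_coth {x : ℝ} (hx : x ≠ 0) : HasDerivAt coth (-csch x ^ 2) x := by
  have hsinh : Real.sinh x ≠ 0 := Real.sinh_ne_zero.2 hx
  refine ((Real.hasDerivAt_cosh x).div (Real.hasDerivAt_sinh x) hsinh).congr_deriv ?_
  simp only [csch]
  field_simp
  linarith [Real.cosh_sq_sub_sinh_sq x]

lemma hasDerivAt_csch {x : ℝ} (hx : x ≠ 0) : HasDerivAt csch (-(coth x * csch x)) x := by
  have hsinh : Real.sinh x ≠ 0 := Real.sinh_ne_zero.2 hx
  refine ((hasDerivAt_const x (1 : ℝ)).div (Real.hasDerivAt_sinh x) hsinh).congr_deriv ?_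
  simp only [coth, csch]
  field_simp
  ring

lemma hasDerivAt_mul_coth_two_mul_add_mul_csch_two_mul (H C : ℝ) {r : ℝ} (hr : r ≠ 0) :
    HasDerivAt (fun x => H * coth (2 * x) + C * csch (2 * x))
      (2 * H - (H * coth (2 * r) + C * csch (2 * r)) * (coth r + Real.tanh r)) r := by
  have h2r : 2 * r ≠ 0 := mul_ne_zero two_ne_zero hr
  have hlin : HasDerivAt (fun x : ℝ => 2 * x) 2 r := by
    simpa using (hasDerivAt_id r).const_mul (2 : ℝ)
  have hcoth := (hasDerivAt_coth h2r).comp r hlin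
  have hcsch := (hasDerivAt_csch h2r).comp r hlin
  refine ((hcoth.const_mul H).add (hcsch.const_mul C)).congr_deriv ?_
  rw [coth_add_tanh]
  linear_combination (2 * H) * coth_sq_sub_csch_sq h2r

lemma mul_coth_add_mul_csch_eq {y : ℝ} (hy : y ≠ 0) (H a : ℝ) :
    H * coth y + (-H * Real.cosh y + Real.sinh y * a) * csch y = a := by
  have hsinh : Real.sinh y ≠ 0 := Real.sinh_ne_zero.2 hy
  simp only [coth, csch]
  field_simp
  ring

theorem stmt_0_general (H ρ s : ℝ) (hρ : 0 < ρ)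
    (C : ℝ)
    (hC : C = -H * Real.cosh (2 * ρ) +
      Real.sinh (2 * ρ) * Real.cosh ρ * s / Real.sqrt (1 + Real.cosh ρ ^ 2 * s ^ 2))
    (g : ℝ → ℝ) (hg : ∀ r, g r = H * coth (2 * r) + C * csch (2 * r)) :
    (∀ r > 0, HasDerivAt g (2 * H - g r * (coth r + Real.tanh r)) r) ∧
    g ρ = Real.cosh ρ * s / Real.sqrt (1 + Real.cosh ρ ^ 2 * s ^ 2) := by
  obtain rfl : g = fun r => H * coth (2 * r) + C * csch (2 * r) := funext hg
  refine ⟨fun r hr => hasDerivAt_mul_coth_two_mul_add_mul_csch_two_mul H C hr.ne', ?_⟩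
  rw [hC, mul_assoc, mul_div_assoc]
  exact mul_coth_add_mul_csch_eq (mul_ne_zero two_ne_zero hρ.ne') H _

/-- The function `g(r) = H coth(2r) + C csch(2r)`, with
`C = -H cosh(2ρ) + sinh(2ρ) cosh(ρ) s / √(1 + cosh²(ρ) s²)`, solves the ODE
`g'(r) + g(r)(coth r + tanh r) - 2H = 0` on `(0,∞)` and satisfies
`g(ρ) = cosh(ρ) s / √(1 + cosh²(ρ) s²)`. -/
theorem stmt_0 (H ρ s : ℝ) (hH : H ∈ Set.Ioo (-1 : ℝ) 1) (hρ : 0 < ρ) (hs : 0 ≤ s)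
    (C : ℝ)
    (hC : C = -H * Real.cosh (2 * ρ) +
      Real.sinh (2 * ρ) * Real.cosh ρ * s / Real.sqrt (1 + Real.cosh ρ ^ 2 * s ^ 2))
    (g : ℝ → ℝ) (hg : ∀ r, g r = H * coth (2 * r) + C * csch (2 * r)) :
    (∀ r > 0, HasDerivAt g (2 * H - g r * (coth r + Real.tanh r)) r) ∧
    g ρ = Real.cosh ρ * s / Real.sqrt (1 + Real.cosh ρ ^ 2 * s ^ 2) :=
  stmt_0_general H ρ s hρ C hC g hg
end

section
/- Let $H \in [0,1)$, $\rho > 0$, and let $C \in \mathbb{R}$ satisfy $-H\cosh(2\rho) \le C \le \sinh(2\rho) - H\cosh(2\rho)$. Then for every $r > \rho$ one has $0 \le H\coth(2r) + C\,\operatorname{csch}(2r) < 1$. -/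
open Real

/-- If `H ∈ [0,1)`, `ρ > 0` and `-H cosh(2ρ) ≤ C ≤ sinh(2ρ) - H cosh(2ρ)`, then
`0 ≤ H coth(2r) + C csch(2r) < 1` for all `r > ρ`. -/
theorem stmt_1 (H ρ C : ℝ) (hH : H ∈ Set.Ico (0 : ℝ) 1) (hρ : 0 < ρ)
    (hC₁ : -H * Real.cosh (2 * ρ) ≤ C)
    (hC₂ : C ≤ Real.sinh (2 * ρ) - H * Real.cosh (2 * ρ)) :
    ∀ r > ρ, 0 ≤ H * coth (2 * r) + C * csch (2 * r) ∧
      H * coth (2 * r) + C * csch (2 * r) < 1 := by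
  intro r hr
  obtain ⟨hH0, hH1⟩ := hH
  have h2 : (2:ℝ) * ρ < 2 * r := by linarith
  have hs : 0 < Real.sinh (2 * r) := Real.sinh_pos_iff.2 (by linarith)
  have hsinh : Real.sinh (2 * ρ) < Real.sinh (2 * r) := Real.sinh_lt_sinh.2 h2
  have hcosh : Real.cosh (2 * ρ) < Real.cosh (2 * r) := by
    rw [Real.cosh_lt_cosh, abs_of_pos (by linarith), abs_of_pos (by linarith)]
    exact h2
  have hdiff : Real.cosh (2 * r) - Real.sinh (2 * r) < Real.cosh (2 * ρ) - Real.sinh (2 * ρ) := by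
    rw [Real.cosh_sub_sinh, Real.cosh_sub_sinh]
    exact Real.exp_lt_exp.2 (by linarith)
  have key1 : 0 ≤ H * Real.cosh (2 * r) + C := by nlinarith
  have key2 : H * Real.cosh (2 * r) + C < Real.sinh (2 * r) := by nlinarith
  have heq : H * coth (2 * r) + C * csch (2 * r)
      = (H * Real.cosh (2 * r) + C) / Real.sinh (2 * r) := by
    unfold coth csch; field_simp
  rw [heq]
  exact ⟨div_nonneg key1 hs.le, (div_lt_one hs).2 key2⟩
end

section
/- Let $H \in [0,1)$ and $\rho > 0$, and define $x_\rho(t) = \dfrac{H\cosh(2\rho+2t) + \sinh(2\rho) - H\cosh(2\rho)}{\sinh(2\rho+2t)}$ for $t \ge 0$. Then $x_\rho(0) = 1$ and $0 < x_\rho(t) < 1$ for every $t > 0$. -/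
open Real

/-! Write `a = 2ρ` and `b = 2ρ + 2t`. For `0 < a < b` the numerator
`H (cosh b - cosh a) + sinh a` is positive because `cosh` increases on `[0, ∞)`, and it is
below `sinh b` because `cosh b - cosh a < sinh b - sinh a`, which is `exp (-b) < exp (-a)`. -/

lemma cosh_sub_cosh_lt_sinh_sub_sinh {a b : ℝ} (hab : a < b) :
    cosh b - cosh a < sinh b - sinh a := by
  have h := exp_lt_exp.mpr (neg_lt_neg hab)
  rw [← cosh_sub_sinh, ← cosh_sub_sinh] at h
  linarith

section

variable {H a b : ℝ}

lemma div_sinh_pos (hH : 0 ≤ H) (ha : 0 < a) (hab : a < b) :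
    0 < (H * cosh b + sinh a - H * cosh a) / sinh b := by
  have hcosh : cosh a < cosh b := cosh_strictMonoOn ha.le (ha.trans hab).le hab
  have hsinh : 0 < sinh a := sinh_pos_iff.mpr ha
  apply div_pos _ (sinh_pos_iff.mpr (ha.trans hab))
  nlinarith

lemma div_sinh_lt_one (hH : H ≤ 1) (ha : 0 ≤ a) (hab : a < b) :
    (H * cosh b + sinh a - H * cosh a) / sinh b < 1 := by
  have hcosh : cosh a ≤ cosh b := cosh_strictMonoOn.monotoneOn ha (ha.trans hab.le) hab.le
  rw [div_lt_one (sinh_pos_iff.mpr (ha.trans_lt hab))]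
  nlinarith [cosh_sub_cosh_lt_sinh_sub_sinh hab]

end

/-- For `H ∈ [0,1)` and `ρ > 0`, the function
`x_ρ(t) = (H cosh(2ρ+2t) + sinh(2ρ) - H cosh(2ρ)) / sinh(2ρ+2t)`
satisfies `x_ρ(0) = 1` and `0 < x_ρ(t) < 1` for all `t > 0`. -/
theorem stmt_3 (H ρ : ℝ) (hH : H ∈ Set.Ico (0 : ℝ) 1) (hρ : 0 < ρ)
    (x : ℝ → ℝ)
    (hx : ∀ t, x t = (H * Real.cosh (2 * ρ + 2 * t) + Real.sinh (2 * ρ) -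
      H * Real.cosh (2 * ρ)) / Real.sinh (2 * ρ + 2 * t)) :
    x 0 = 1 ∧ ∀ t > 0, 0 < x t ∧ x t < 1 := by
  have ha : 0 < 2 * ρ := by positivity
  refine ⟨?_, fun t ht => ?_⟩
  · rw [hx, mul_zero, add_zero, add_sub_cancel_left]
    exact div_self (sinh_pos_iff.mpr ha).ne'
  · have hab : 2 * ρ < 2 * ρ + 2 * t := by linarith
    rw [hx]
    exact ⟨div_sinh_pos hH.1 ha hab, div_sinh_lt_one hH.2.le ha.le hab⟩
end

section
/- Let $H \in [0,1)$ and $\rho > 0$, and define $x_\rho(t) = \dfrac{H\cosh(2\rho+2t) + \sinh(2\rho) - H\cosh(2\rho)}{\sinh(2\rho+2t)}$ for $t > 0$. Then for every $r > 0$ the function $t \mapsto \dfrac{x_\rho(t)}{\cosh(t)\sqrt{1-x_\rho(t)^2}}$ is integrable on the interval $(0,r)$, even though it is unbounded near $t = 0$. -/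
/-!
By the sum-to-product formulas,
`1 - x_ρ(t) = 2 sinh t (cosh(2ρ+t) - H sinh(2ρ+t)) / sinh(2ρ+2t)`, and since `H ≤ 1` the middle
factor is at least `exp (-(2ρ+t))`. As `0 < x_ρ`, this gives `1 - x_ρ(t)² ≥ 1 - x_ρ(t) ≥ c t` on
`(0, r)`, so the integrand is dominated by `t^(-1/2) / √c`. On the other hand `x_ρ(0) = 1`, so the
denominator `cosh t · √(1 - x_ρ(t)²)` tends to `0⁺` and the integrand to `+∞` as `t → 0⁺`.
-/

open Real MeasureTheory Filter Topology Set

lemma sinh_add_two_mul_sub_sinh (a t : ℝ) :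
    sinh (a + 2 * t) - sinh a = 2 * sinh t * cosh (a + t) := by
  obtain ⟨b, rfl⟩ : ∃ b, a = b - t := ⟨a + t, by ring⟩
  rw [show b - t + 2 * t = b + t by ring, show b - t + t = b by ring, sinh_add, sinh_sub]
  ring

lemma cosh_add_two_mul_sub_cosh (a t : ℝ) :
    cosh (a + 2 * t) - cosh a = 2 * sinh t * sinh (a + t) := by
  obtain ⟨b, rfl⟩ : ∃ b, a = b - t := ⟨a + t, by ring⟩
  rw [show b - t + 2 * t = b + t by ring, show b - t + t = b by ring, cosh_add, cosh_sub]
  ring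

lemma exp_neg_le_cosh_sub_mul_sinh {a H : ℝ} (ha : 0 ≤ a) (hH : H ≤ 1) :
    exp (-a) ≤ cosh a - H * sinh a := by
  have := mul_nonneg (sub_nonneg.2 hH) (sinh_nonneg_iff.2 ha)
  rw [← cosh_sub_sinh]
  linarith

lemma integrableOn_Ioo_of_norm_le_mul_rpow {E : Type*} [NormedAddCommGroup E] {f : ℝ → E}
    {r s C : ℝ} (hr : 0 < r) (hs : -1 < s)
    (hf : AEStronglyMeasurable f (volume.restrict (Ioo 0 r)))
    (hbound : ∀ t ∈ Ioo 0 r, ‖f t‖ ≤ C * t ^ s) :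
    IntegrableOn f (Ioo 0 r) :=
  (((intervalIntegral.integrableOn_Ioo_rpow_iff hr).2 hs).const_mul C).mono' hf
    ((ae_restrict_iff' measurableSet_Ioo).2 (ae_of_all _ hbound))

lemma div_cosh_mul_sqrt_one_sub_sq_le {y c t : ℝ} (hy : 0 ≤ y) (hc : 0 < c) (ht : 0 < t)
    (h : c * t ≤ 1 - y) :
    y / (cosh t * √(1 - y ^ 2)) ≤ (√c)⁻¹ * t ^ (-(1 / 2) : ℝ) := by
  have hct := mul_pos hc ht
  have hy1 : y ≤ 1 := by linarith
  have hD : √(c * t) ≤ cosh t * √(1 - y ^ 2) := calc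
    √(c * t) ≤ √(1 - y ^ 2) := sqrt_le_sqrt (by nlinarith)
    _ ≤ cosh t * √(1 - y ^ 2) := le_mul_of_one_le_left (sqrt_nonneg _) (one_le_cosh t)
  calc y / (cosh t * √(1 - y ^ 2)) ≤ 1 / √(c * t) :=
        div_le_div₀ zero_le_one hy1 (sqrt_pos.2 hct) hD
    _ = (√c)⁻¹ * t ^ (-(1 / 2) : ℝ) := by
        rw [one_div, sqrt_mul hc.le, mul_inv, rpow_neg ht.le, ← sqrt_eq_rpow]

lemma tendsto_div_cosh_mul_sqrt_one_sub_sq_atTop {y : ℝ → ℝ} (hy : Tendsto y (𝓝[>] 0) (𝓝 1))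
    (hy1 : ∀ᶠ t in 𝓝[>] 0, y t < 1) :
    Tendsto (fun t => y t / (cosh t * √(1 - y t ^ 2))) (𝓝[>] 0) atTop := by
  have hD : Tendsto (fun t => cosh t * √(1 - y t ^ 2)) (𝓝[>] 0) (𝓝 0) := by
    simpa using (continuous_cosh.tendsto 0).mono_left nhdsWithin_le_nhds
      |>.mul (((hy.pow 2).const_sub 1).sqrt)
  have hD_pos : ∀ᶠ t in 𝓝[>] 0, 0 < cosh t * √(1 - y t ^ 2) := by
    filter_upwards [hy1, hy.eventually (lt_mem_nhds one_pos)] with t h1 h0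
    have : 0 < 1 - y t ^ 2 := by nlinarith
    positivity
  simp only [div_eq_mul_inv]
  exact hy.pos_mul_atTop one_pos
    (tendsto_nhdsWithin_of_tendsto_nhds_of_eventually_within _ hD hD_pos).inv_tendsto_nhdsGT_zero

lemma not_bddAbove_image_of_tendsto_atTop {α : Type*} {l : Filter α} [l.NeBot] {f : α → ℝ}
    {s : Set α} (hf : Tendsto f l atTop) (hs : s ∈ l) : ¬BddAbove (f '' s) := by
  rintro ⟨M, hM⟩
  obtain ⟨t, hts, hMt⟩ := ((eventually_mem_set.2 hs).and (hf.eventually_gt_atTop M)).exists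
  exact (hM ⟨t, hts, rfl⟩).not_gt hMt

noncomputable def xRho (H ρ t : ℝ) : ℝ :=
  (H * cosh (2 * ρ + 2 * t) + sinh (2 * ρ) - H * cosh (2 * ρ)) / sinh (2 * ρ + 2 * t)

section xRho

variable {H ρ t : ℝ}

lemma xRho_zero (hρ : ρ ≠ 0) : xRho H ρ 0 = 1 := by
  have : sinh (2 * ρ) ≠ 0 := sinh_ne_zero.2 (by positivity)
  simp [xRho, this]

lemma continuousAt_xRho (h : ρ + t ≠ 0) : ContinuousAt (xRho H ρ) t := by
  unfold xRho
  exact ContinuousAt.div (by fun_prop) (by fun_prop) (sinh_ne_zero.2 (by contrapose! h; linarith))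

lemma xRho_pos (hH : 0 ≤ H) (hρ : 0 < ρ) (ht : 0 ≤ t) : 0 < xRho H ρ t := by
  have hcosh := cosh_add_two_mul_sub_cosh (2 * ρ) t
  have : 0 ≤ H * (2 * sinh t * sinh (2 * ρ + t)) := by positivity
  unfold xRho
  apply div_pos _ (by positivity)
  nlinarith [sinh_pos_iff.2 (by positivity : 0 < 2 * ρ)]

lemma one_sub_xRho (h : ρ + t ≠ 0) :
    1 - xRho H ρ t =
      2 * sinh t * (cosh (2 * ρ + t) - H * sinh (2 * ρ + t)) / sinh (2 * ρ + 2 * t) := by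
  rw [xRho, one_sub_div (sinh_ne_zero.2 (by contrapose! h; linarith))]
  congr 1
  linear_combination
    sinh_add_two_mul_sub_sinh (2 * ρ) t - H * cosh_add_two_mul_sub_cosh (2 * ρ) t

lemma mul_le_one_sub_xRho {r : ℝ} (hH : H ≤ 1) (hρ : 0 < ρ) (ht : 0 < t) (htr : t ≤ r) :
    2 * exp (-(2 * ρ + r)) / sinh (2 * ρ + 2 * r) * t ≤ 1 - xRho H ρ t := by
  have hexp : exp (-(2 * ρ + r)) ≤ cosh (2 * ρ + t) - H * sinh (2 * ρ + t) :=
    (exp_le_exp.2 (by linarith)).trans (exp_neg_le_cosh_sub_mul_sinh (by positivity) hH)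
  have hsinh : t ≤ sinh t := self_le_sinh_iff.2 ht.le
  have hprod := mul_le_mul hsinh hexp (exp_pos _).le (sinh_pos_iff.2 ht).le
  rw [one_sub_xRho (by positivity), div_mul_eq_mul_div]
  have hF := (exp_pos _).trans_le hexp
  exact div_le_div₀ (by positivity) (by linarith) (sinh_pos_iff.2 (by positivity))
    (sinh_le_sinh.2 (by linarith))

lemma xRho_lt_one (hH : H ≤ 1) (hρ : 0 < ρ) (ht : 0 < t) : xRho H ρ t < 1 := by
  have := mul_le_one_sub_xRho hH hρ ht le_rfl
  have : 0 < 2 * exp (-(2 * ρ + t)) / sinh (2 * ρ + 2 * t) * t := by positivity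
  linarith

lemma integrableOn_xRho_div_cosh_mul_sqrt {r : ℝ} (hH₀ : 0 ≤ H) (hH₁ : H ≤ 1) (hρ : 0 < ρ)
    (hr : 0 < r) :
    IntegrableOn (fun t => xRho H ρ t / (cosh t * √(1 - xRho H ρ t ^ 2))) (Ioo 0 r) := by
  set c := 2 * exp (-(2 * ρ + r)) / sinh (2 * ρ + 2 * r)
  have hc : 0 < c := by positivity
  refine integrableOn_Ioo_of_norm_le_mul_rpow hr (s := -(1 / 2)) (C := (√c)⁻¹) (by norm_num)
    ?_ fun t ⟨ht, htr⟩ => ?_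
  · unfold xRho
    exact Measurable.aestronglyMeasurable (by fun_prop)
  · have hx := xRho_pos (H := H) hH₀ hρ ht.le
    rw [norm_of_nonneg (by positivity)]
    exact div_cosh_mul_sqrt_one_sub_sq_le hx.le hc ht (mul_le_one_sub_xRho hH₁ hρ ht htr.le)

lemma tendsto_xRho_div_cosh_mul_sqrt_atTop (hH : H ≤ 1) (hρ : 0 < ρ) :
    Tendsto (fun t => xRho H ρ t / (cosh t * √(1 - xRho H ρ t ^ 2))) (𝓝[>] 0) atTop := by
  refine tendsto_div_cosh_mul_sqrt_one_sub_sq_atTop ?_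
    (eventually_nhdsWithin_of_forall fun t ht => xRho_lt_one hH hρ ht)
  have := (continuousAt_xRho (H := H) (t := 0) (by simpa using hρ.ne')).tendsto
  rw [xRho_zero hρ.ne'] at this
  exact this.mono_left nhdsWithin_le_nhds

end xRho

/-- For `H ∈ [0,1)` and `ρ > 0`, with
`x_ρ(t) = (H cosh(2ρ+2t) + sinh(2ρ) - H cosh(2ρ)) / sinh(2ρ+2t)`,
the function `t ↦ x_ρ(t)/(cosh(t)√(1-x_ρ(t)²))` is integrable on `(0,r)` for every
`r > 0`, even though it is unbounded near `t = 0`. -/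
theorem stmt_5 (H ρ : ℝ) (hH : H ∈ Set.Ico (0 : ℝ) 1) (hρ : 0 < ρ)
    (x : ℝ → ℝ)
    (hx : ∀ t, x t = (H * Real.cosh (2 * ρ + 2 * t) + Real.sinh (2 * ρ) -
      H * Real.cosh (2 * ρ)) / Real.sinh (2 * ρ + 2 * t)) :
    (∀ r > 0, IntegrableOn
      (fun t => x t / (Real.cosh t * Real.sqrt (1 - x t ^ 2))) (Set.Ioo 0 r)) ∧
    (∀ ε > 0, ¬ BddAbove
      ((fun t => x t / (Real.cosh t * Real.sqrt (1 - x t ^ 2))) '' Set.Ioo 0 ε)) := by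
  obtain rfl : x = xRho H ρ := funext hx
  exact ⟨fun r hr => integrableOn_xRho_div_cosh_mul_sqrt hH.1 hH.2.le hρ hr,
    fun ε hε => not_bddAbove_image_of_tendsto_atTop
      (tendsto_xRho_div_cosh_mul_sqrt_atTop hH.2.le hρ) (Ioo_mem_nhdsGT hε)⟩
end

section
/- Let $H \in [0,1)$ and fix $t > 0$. Then the function $\rho \mapsto x_\rho(t) = \dfrac{H\cosh(2\rho+2t) + \sinh(2\rho) - H\cosh(2\rho)}{\sinh(2\rho+2t)}$ is strictly increasing on $(0,\infty)$. -/
open Real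

/-- For `H ∈ [0,1)` and fixed `t > 0`, the function
`ρ ↦ x_ρ(t) = (H cosh(2ρ+2t) + sinh(2ρ) - H cosh(2ρ)) / sinh(2ρ+2t)`
is strictly increasing on `(0,∞)`. -/
theorem stmt_6 (H t : ℝ) (hH : H ∈ Set.Ico (0 : ℝ) 1) (ht : 0 < t) :
    StrictMonoOn (fun ρ : ℝ =>
      (H * Real.cosh (2 * ρ + 2 * t) + Real.sinh (2 * ρ) - H * Real.cosh (2 * ρ)) /
        Real.sinh (2 * ρ + 2 * t)) (Set.Ioi 0) := by
  obtain ⟨hH0, hH1⟩ := hH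
  intro x hx y hy hxy
  simp only
  have hx0 : (0:ℝ) < x := hx
  have hy0 : (0:ℝ) < y := hy
  have hs1 : 0 < Real.sinh (2 * x + 2 * t) := Real.sinh_pos_iff.mpr (by linarith)
  have hs2 : 0 < Real.sinh (2 * y + 2 * t) := Real.sinh_pos_iff.mpr (by linarith)
  rw [div_lt_div_iff₀ hs1 hs2]
  have e1 : Real.cosh (2 * x + 2 * t)
      = Real.cosh (2*x) * Real.cosh (2*t) + Real.sinh (2*x) * Real.sinh (2*t) :=
    Real.cosh_add _ _
  have e2 : Real.cosh (2 * y + 2 * t)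
      = Real.cosh (2*y) * Real.cosh (2*t) + Real.sinh (2*y) * Real.sinh (2*t) :=
    Real.cosh_add _ _
  have e3 : Real.sinh (2 * x + 2 * t)
      = Real.sinh (2*x) * Real.cosh (2*t) + Real.cosh (2*x) * Real.sinh (2*t) :=
    Real.sinh_add _ _
  have e4 : Real.sinh (2 * y + 2 * t)
      = Real.sinh (2*y) * Real.cosh (2*t) + Real.cosh (2*y) * Real.sinh (2*t) :=
    Real.sinh_add _ _
  have hfac1 : 0 < Real.sinh (2*y) * Real.cosh (2*x) - Real.cosh (2*y) * Real.sinh (2*x) := by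
    have := Real.sinh_sub (2*y) (2*x)
    have hpos : 0 < Real.sinh (2*y - 2*x) := Real.sinh_pos_iff.mpr (by linarith)
    linarith [this ▸ hpos]
  have hfac2 : 0 < H * (Real.cosh (2*t) - 1) + Real.sinh (2*t) := by
    have h1 : 1 ≤ Real.cosh (2*t) := Real.one_le_cosh _
    have h2 : 0 < Real.sinh (2*t) := Real.sinh_pos_iff.mpr (by linarith)
    nlinarith
  have key : 0 < (Real.sinh (2*y) * Real.cosh (2*x) - Real.cosh (2*y) * Real.sinh (2*x))
      * (H * (Real.cosh (2*t) - 1) + Real.sinh (2*t)) := mul_pos hfac1 hfac2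
  have pyth : Real.cosh (2*t) ^ 2 - Real.sinh (2*t) ^ 2 = 1 := Real.cosh_sq_sub_sinh_sq _
  have iden :
      (H * (Real.cosh (2*y) * Real.cosh (2*t) + Real.sinh (2*y) * Real.sinh (2*t))
          + Real.sinh (2*y) - H * Real.cosh (2*y))
        * (Real.sinh (2*x) * Real.cosh (2*t) + Real.cosh (2*x) * Real.sinh (2*t))
      - (H * (Real.cosh (2*x) * Real.cosh (2*t) + Real.sinh (2*x) * Real.sinh (2*t))
          + Real.sinh (2*x) - H * Real.cosh (2*x))
        * (Real.sinh (2*y) * Real.cosh (2*t) + Real.cosh (2*y) * Real.sinh (2*t))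
      = (Real.sinh (2*y) * Real.cosh (2*x) - Real.cosh (2*y) * Real.sinh (2*x))
        * (H * (Real.cosh (2*t) - 1) + Real.sinh (2*t)) := by
    linear_combination (H * (Real.sinh (2*x) * Real.cosh (2*y)
      - Real.cosh (2*x) * Real.sinh (2*y))) * pyth
  rw [e1, e2, e3, e4]
  linarith [key, iden]
end

section
/- Let $H \in [0,1)$. Then for all $\rho > 0$ and all $t > 0$, $\dfrac{H\cosh(2\rho+2t) + \sinh(2\rho) - H\cosh(2\rho)}{\sinh(2\rho+2t)} < H + (1-H)e^{-2t}$. -/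
open Real

/-- For `H ∈ [0,1)`, all `ρ > 0` and all `t > 0`,
`(H cosh(2ρ+2t) + sinh(2ρ) - H cosh(2ρ)) / sinh(2ρ+2t) < H + (1-H)e^{-2t}`. -/
theorem stmt_8 (H : ℝ) (hH : H ∈ Set.Ico (0 : ℝ) 1) :
    ∀ ρ > (0 : ℝ), ∀ t > (0 : ℝ),
      (H * Real.cosh (2 * ρ + 2 * t) + Real.sinh (2 * ρ) - H * Real.cosh (2 * ρ)) /
        Real.sinh (2 * ρ + 2 * t) < H + (1 - H) * Real.exp (-2 * t) := by
  obtain ⟨hH0, hH1⟩ := hH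
  intro ρ hρ t ht
  have ha : (1:ℝ) < Real.exp (2*ρ) := by
    have := Real.one_lt_exp_iff.mpr (show (0:ℝ) < 2*ρ by linarith)
    simpa using this
  have hb : (1:ℝ) < Real.exp (2*t) := by
    have := Real.one_lt_exp_iff.mpr (show (0:ℝ) < 2*t by linarith)
    simpa using this
  set a := Real.exp (2*ρ) with ha'
  set b := Real.exp (2*t) with hb'
  have hapos : 0 < a := lt_trans one_pos ha
  have hbpos : 0 < b := lt_trans one_pos hb
  have hs : 0 < Real.sinh (2*ρ+2*t) := Real.sinh_pos_iff.mpr (by linarith)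
  rw [div_lt_iff₀ hs]
  have h1 : Real.exp (2*ρ+2*t) = a*b := Real.exp_add _ _
  have h2 : Real.exp (-(2*ρ+2*t)) = (a*b)⁻¹ := by rw [Real.exp_neg, h1]
  have h3 : Real.exp (-(2*ρ)) = a⁻¹ := by rw [Real.exp_neg]
  have h4 : Real.exp (-2*t) = b⁻¹ := by rw [show (-2*t : ℝ) = -(2*t) by ring, Real.exp_neg]
  have h5 : Real.exp (2*ρ) = a := rfl
  have h6 : Real.exp (2*t) = b := rfl
  simp only [Real.sinh_eq, Real.cosh_eq, h1, h2, h3, h4, h5, h6]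
  have hane : a ≠ 0 := ne_of_gt hapos
  have hbne : b ≠ 0 := ne_of_gt hbpos
  rw [show (a*b)⁻¹ = a⁻¹ * b⁻¹ by rw [mul_inv]]
  have hai : a * a⁻¹ = 1 := mul_inv_cancel₀ hane
  have hbi : b * b⁻¹ = 1 := mul_inv_cancel₀ hbne
  have haipos : 0 < a⁻¹ := inv_pos.mpr hapos
  have hbipos : 0 < b⁻¹ := inv_pos.mpr hbpos
  have key : 0 < (b - 1) * ((1+H)*b + (1-H)) :=
    mul_pos (by linarith) (by nlinarith)
  have h7 : (H + (1-H)*b⁻¹)*((a*b - a⁻¹*b⁻¹)/2)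
      - (H*((a*b + a⁻¹*b⁻¹)/2) + (a-a⁻¹)/2 - H*((a+a⁻¹)/2))
      = (b-1)*((1+H)*b+(1-H)) * a⁻¹ * b⁻¹ * b⁻¹ / 2 := by
    field_simp
    ring
  have h8 : 0 < (b-1)*((1+H)*b+(1-H)) * a⁻¹ * b⁻¹ * b⁻¹ / 2 := by positivity
  linarith [h7, h8]
end

section
/- For every $H \in [0,1)$, the function $t \mapsto \dfrac{H + (1-H)e^{-2t}}{\cosh(t)\sqrt{1 - (H+(1-H)e^{-2t})^2}}$ is integrable on $(0,\infty)$; that is, the constant $B(H) = \displaystyle\int_0^{\infty} \frac{H + (1-H)e^{-2t}}{\cosh(t)\sqrt{1 - (H+(1-H)e^{-2t})^2}}\,dt$ is finite. -/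
open Real MeasureTheory

set_option maxHeartbeats 2000000 in
/-- For every `H ∈ [0,1)`, the function
`t ↦ (H+(1-H)e^{-2t})/(cosh(t)√(1-(H+(1-H)e^{-2t})²))` is integrable on `(0,∞)`,
i.e. the height bound `B(H)` is finite. -/
theorem stmt_10 (H : ℝ) (hH : H ∈ Set.Ico (0 : ℝ) 1) :
    IntegrableOn (fun t : ℝ =>
      (H + (1 - H) * Real.exp (-2 * t)) /
        (Real.cosh t * Real.sqrt (1 - (H + (1 - H) * Real.exp (-2 * t)) ^ 2)))
      (Set.Ioi 0) := by
  obtain ⟨hH0, hH1⟩ := hH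
  have hH1' : (0:ℝ) < 1 - H := by linarith
  have he2 : Real.exp (-2) < 1 := by
    have := Real.exp_lt_exp.mpr (show (-2:ℝ) < 0 by norm_num)
    simpa [Real.exp_zero] using this
  set c : ℝ := Real.sqrt ((1 - H) * (1 - Real.exp (-2))) with hc
  have hc_pos : 0 < c := Real.sqrt_pos.mpr (by nlinarith)
  -- the dominating function
  set g : ℝ → ℝ := fun t => (2 / c) * (Real.exp (-t) * t ^ (-(1/2) : ℝ) + Real.exp (-t))
    with hgdef
  have hg : IntegrableOn g (Set.Ioi 0) := by
    have hg1 : IntegrableOn (fun t : ℝ => Real.exp (-t) * t ^ ((1:ℝ)/2 - 1)) (Set.Ioi 0) :=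
      Real.GammaIntegral_convergent (by norm_num)
    have hg1' : IntegrableOn (fun t : ℝ => Real.exp (-t) * t ^ (-(1/2) : ℝ)) (Set.Ioi 0) := by
      convert hg1 using 2; norm_num
    have hg2 : IntegrableOn (fun t : ℝ => Real.exp (-t)) (Set.Ioi 0) := by
      have := exp_neg_integrableOn_Ioi (0:ℝ) (show (0:ℝ) < 1 by norm_num)
      simpa using this
    exact ((hg1'.add hg2).const_mul _)
  -- measurability
  have hmeas : AEStronglyMeasurable (fun t : ℝ =>
      (H + (1 - H) * Real.exp (-2 * t)) /
        (Real.cosh t * Real.sqrt (1 - (H + (1 - H) * Real.exp (-2 * t)) ^ 2)))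
      (volume.restrict (Set.Ioi 0)) := by
    apply ContinuousOn.aestronglyMeasurable _ measurableSet_Ioi
    apply ContinuousOn.div
    · fun_prop
    · fun_prop
    · intro t ht
      have ht : 0 < t := ht
      have hE1 : Real.exp (-2 * t) < 1 := by
        have := Real.exp_lt_exp.mpr (show -2 * t < 0 by nlinarith)
        simpa [Real.exp_zero] using this
      have hu0 : 0 ≤ H + (1 - H) * Real.exp (-2 * t) :=
        add_nonneg hH0 (mul_nonneg hH1'.le (Real.exp_pos _).le)
      have hu1 : H + (1 - H) * Real.exp (-2 * t) < 1 := by nlinarith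
      have hs : 0 < Real.sqrt (1 - (H + (1 - H) * Real.exp (-2 * t)) ^ 2) :=
        Real.sqrt_pos.mpr (by nlinarith)
      have hco : 0 < Real.cosh t := Real.cosh_pos t
      positivity
  refine Integrable.mono' hg hmeas ?_
  rw [MeasureTheory.ae_restrict_iff' measurableSet_Ioi]
  refine MeasureTheory.ae_of_all _ fun t ht => ?_
  have ht : 0 < t := ht
  set E := Real.exp (-2 * t) with hEdef
  set u := H + (1 - H) * E with hudef
  have hE0 : 0 < E := Real.exp_pos _
  have hE1 : E < 1 := by
    have := Real.exp_lt_exp.mpr (show -2 * t < 0 by nlinarith)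
    simpa [Real.exp_zero, hEdef] using this
  have hu0 : 0 ≤ u := add_nonneg hH0 (mul_nonneg hH1'.le hE0.le)
  have hu1 : u < 1 := by nlinarith
  have hu2 : 0 < 1 - u ^ 2 := by nlinarith
  have hs : 0 < Real.sqrt (1 - u ^ 2) := Real.sqrt_pos.mpr hu2
  have hco : 0 < Real.cosh t := Real.cosh_pos t
  have hfnn : 0 ≤ u / (Real.cosh t * Real.sqrt (1 - u ^ 2)) :=
    div_nonneg hu0 (by positivity)
  rw [Real.norm_eq_abs, abs_of_nonneg hfnn]
  -- lower bound for the square root factor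
  have hlow : (1 - H) * (1 - E) ≤ 1 - u ^ 2 := by nlinarith
  have hcosh : Real.exp t / 2 ≤ Real.cosh t := by
    rw [Real.cosh_eq]; have := Real.exp_pos (-t); linarith
  -- main bound: f t ≤ 2 * exp(-t) / sqrt((1-H)*(1-E))
  have hsq : Real.sqrt ((1 - H) * (1 - E)) ≤ Real.sqrt (1 - u ^ 2) :=
    Real.sqrt_le_sqrt hlow
  have hsq0 : 0 < Real.sqrt ((1 - H) * (1 - E)) :=
    Real.sqrt_pos.mpr (by nlinarith)
  have hmain : u / (Real.cosh t * Real.sqrt (1 - u ^ 2))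
      ≤ 2 * Real.exp (-t) / Real.sqrt ((1 - H) * (1 - E)) := by
    have hden : Real.exp t / 2 * Real.sqrt ((1 - H) * (1 - E))
        ≤ Real.cosh t * Real.sqrt (1 - u ^ 2) := by
      apply mul_le_mul hcosh hsq hsq0.le hco.le
    have hdenpos : 0 < Real.exp t / 2 * Real.sqrt ((1 - H) * (1 - E)) := by positivity
    calc u / (Real.cosh t * Real.sqrt (1 - u ^ 2))
        ≤ 1 / (Real.exp t / 2 * Real.sqrt ((1 - H) * (1 - E))) :=
          div_le_div₀ (by norm_num) hu1.le hdenpos hden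
      _ = 2 * Real.exp (-t) / Real.sqrt ((1 - H) * (1 - E)) := by
          rw [Real.exp_neg]; field_simp
  refine hmain.trans ?_
  have hexp : 0 < Real.exp (-t) := Real.exp_pos _
  rcases le_or_gt t 1 with htle | htgt
  · -- small t : use convexity of exp to bound 1 - E from below by (1 - e⁻²) t
    have hconv := convexOn_exp.2 (Set.mem_univ (0:ℝ)) (Set.mem_univ (-2:ℝ))
      (show (0:ℝ) ≤ 1 - t by linarith) ht.le (by ring)
    have harg : (1 - t) • (0:ℝ) + t • (-2:ℝ) = -2 * t := by
      simp [smul_eq_mul]; ring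
    rw [harg] at hconv
    simp only [smul_eq_mul, Real.exp_zero, mul_one] at hconv
    have hEle : E ≤ 1 - (1 - Real.exp (-2)) * t := by
      rw [hEdef]; nlinarith [hconv]
    have h1 : (1 - H) * ((1 - Real.exp (-2)) * t) ≤ (1 - H) * (1 - E) := by nlinarith
    have hsq2 : c * Real.sqrt t ≤ Real.sqrt ((1 - H) * (1 - E)) := by
      have : Real.sqrt ((1 - H) * (1 - Real.exp (-2)) * t)
          ≤ Real.sqrt ((1 - H) * (1 - E)) := by
        apply Real.sqrt_le_sqrt; nlinarith
      rwa [Real.sqrt_mul (by nlinarith) t, ← hc] at this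
    have hst : 0 < Real.sqrt t := Real.sqrt_pos.mpr ht
    have h2 : 2 * Real.exp (-t) / Real.sqrt ((1 - H) * (1 - E))
        ≤ 2 * Real.exp (-t) / (c * Real.sqrt t) := by
      gcongr
    refine h2.trans ?_
    have hrpow : t ^ (-(1/2) : ℝ) = (Real.sqrt t)⁻¹ := by
      rw [Real.rpow_neg ht.le, ← Real.sqrt_eq_rpow]
    have heq : 2 * Real.exp (-t) / (c * Real.sqrt t)
        = (2 / c) * (Real.exp (-t) * t ^ (-(1/2) : ℝ)) := by
      rw [hrpow]; field_simp
    simp only [hgdef]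
    rw [heq]
    nlinarith [mul_nonneg (by positivity : (0:ℝ) ≤ 2 / c) hexp.le]
  · -- large t : 1 - E ≥ 1 - e⁻²
    have hEle : E ≤ Real.exp (-2) := by
      rw [hEdef]; exact Real.exp_le_exp.mpr (by linarith)
    have hsq2 : c ≤ Real.sqrt ((1 - H) * (1 - E)) := by
      rw [hc]; apply Real.sqrt_le_sqrt; nlinarith
    have h2 : 2 * Real.exp (-t) / Real.sqrt ((1 - H) * (1 - E))
        ≤ 2 * Real.exp (-t) / c := by gcongr
    refine h2.trans ?_
    simp only [hgdef]
    have hA : 0 ≤ Real.exp (-t) * t ^ (-(1/2) : ℝ) := by positivity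
    have heq : 2 * Real.exp (-t) / c = (2 / c) * Real.exp (-t) := by ring
    rw [heq]
    nlinarith [mul_nonneg (by positivity : (0:ℝ) ≤ 2 / c) hA]
end

section
/- $\displaystyle\lim_{H \to 1^-} B(H) = +\infty$, where $B(H) = \displaystyle\int_0^{\infty} \frac{H + (1-H)e^{-2t}}{\cosh(t)\sqrt{1 - (H+(1-H)e^{-2t})^2}}\,dt$ for $H \in [0,1)$. -/
open Real MeasureTheory Filter

section Aux
open Set

noncomputable def ffB (H t : ℝ) : ℝ :=
  (H + (1 - H) * Real.exp (-2 * t)) /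
    (Real.cosh t * Real.sqrt (1 - (H + (1 - H) * Real.exp (-2 * t)) ^ 2))

lemma uB_facts {H t : ℝ} (hH0 : 0 ≤ H) (hH1 : H < 1) (ht : 0 < t) :
    H ≤ H + (1 - H) * Real.exp (-2 * t) ∧ 0 < H + (1 - H) * Real.exp (-2 * t) ∧
    H + (1 - H) * Real.exp (-2 * t) < 1 ∧
    0 < 1 - (H + (1 - H) * Real.exp (-2 * t)) ^ 2 := by
  have he0 : 0 < Real.exp (-2 * t) := Real.exp_pos _
  have he1 : Real.exp (-2 * t) < 1 := by
    rw [Real.exp_lt_one_iff]; nlinarith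
  have h1 : 0 < 1 - H := by linarith
  have hu1 : H + (1 - H) * Real.exp (-2 * t) < 1 := by nlinarith
  have hu0 : 0 < H + (1 - H) * Real.exp (-2 * t) := by nlinarith
  refine ⟨by nlinarith, hu0, hu1, by nlinarith [mul_pos (sub_pos.2 hu1) (by linarith : (0:ℝ) < 1 + (H + (1 - H) * Real.exp (-2 * t)))]⟩

lemma ffB_nonneg {H : ℝ} (hH0 : 0 ≤ H) (hH1 : H < 1) (t : ℝ) : 0 ≤ ffB H t := by
  unfold ffB
  apply div_nonneg
  · have := Real.exp_pos (-2 * t); nlinarith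
  · exact mul_nonneg (Real.cosh_pos t).le (Real.sqrt_nonneg _)

lemma sqrt_mul_sqrt_le {c x : ℝ} (hc : 0 ≤ c) (h : c * x ≤ y) :
    Real.sqrt c * Real.sqrt x ≤ Real.sqrt y := by
  rw [← Real.sqrt_mul hc]
  exact Real.sqrt_le_sqrt h

lemma ffB_lower {H t : ℝ} (hH0 : 0 ≤ H) (hH1 : H < 1) (ht : t ∈ Set.Ioc (0:ℝ) 1) :
    H / (2 * Real.cosh 1 * Real.sqrt (1 - H)) * (Real.sqrt t)⁻¹ ≤ ffB H t := by
  obtain ⟨huH, hu0, hu1, husq⟩ := uB_facts hH0 hH1 ht.1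
  set u := H + (1 - H) * Real.exp (-2 * t) with hu
  have h1H : 0 < 1 - H := by linarith
  have hexp : 1 - Real.exp (-2 * t) ≤ 2 * t := by
    nlinarith [Real.add_one_le_exp (-2 * t)]
  have hsq : 1 - u ^ 2 ≤ 4 * ((1 - H) * t) := by nlinarith [Real.exp_pos (-2 * t)]
  have hs : Real.sqrt (1 - u ^ 2) ≤ 2 * Real.sqrt (1 - H) * Real.sqrt t := by
    have h4 : Real.sqrt (4 * ((1 - H) * t)) = 2 * (Real.sqrt (1 - H) * Real.sqrt t) := by
      rw [Real.sqrt_mul (by norm_num : (0:ℝ) ≤ 4), Real.sqrt_mul h1H.le,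
        show (4:ℝ) = 2 ^ 2 by norm_num, Real.sqrt_sq (by norm_num : (0:ℝ) ≤ 2)]
    calc Real.sqrt (1 - u ^ 2) ≤ Real.sqrt (4 * ((1 - H) * t)) := Real.sqrt_le_sqrt hsq
      _ = 2 * Real.sqrt (1 - H) * Real.sqrt t := by rw [h4]; ring
  have hcosh : Real.cosh t ≤ Real.cosh 1 := by
    rw [Real.cosh_le_cosh, abs_of_pos ht.1, abs_one]; exact ht.2
  have hD : 0 < Real.cosh t * Real.sqrt (1 - u ^ 2) :=
    mul_pos (Real.cosh_pos t) (Real.sqrt_pos.2 husq)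
  have hDle : Real.cosh t * Real.sqrt (1 - u ^ 2)
      ≤ 2 * Real.cosh 1 * Real.sqrt (1 - H) * Real.sqrt t := by
    calc Real.cosh t * Real.sqrt (1 - u ^ 2)
        ≤ Real.cosh 1 * (2 * Real.sqrt (1 - H) * Real.sqrt t) :=
          mul_le_mul hcosh hs (Real.sqrt_nonneg _) (Real.cosh_pos 1).le
      _ = 2 * Real.cosh 1 * Real.sqrt (1 - H) * Real.sqrt t := by ring
  have : H / (2 * Real.cosh 1 * Real.sqrt (1 - H) * Real.sqrt t)
      ≤ u / (Real.cosh t * Real.sqrt (1 - u ^ 2)) :=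
    div_le_div₀ hu0.le huH hD hDle
  calc H / (2 * Real.cosh 1 * Real.sqrt (1 - H)) * (Real.sqrt t)⁻¹
      = H / (2 * Real.cosh 1 * Real.sqrt (1 - H) * Real.sqrt t) := by
        rw [← div_eq_mul_inv, div_div]
    _ ≤ ffB H t := this

lemma ffB_upper_Ioc {H t : ℝ} (hH0 : 0 ≤ H) (hH1 : H < 1) (ht : t ∈ Set.Ioc (0:ℝ) 1) :
    ffB H t ≤ (Real.sqrt ((1 - H) * (2 * Real.exp (-2))))⁻¹ * (Real.sqrt t)⁻¹ := by
  obtain ⟨huH, hu0, hu1, husq⟩ := uB_facts hH0 hH1 ht.1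
  set u := H + (1 - H) * Real.exp (-2 * t) with hu
  have h1H : 0 < 1 - H := by linarith
  have hc : (0:ℝ) < (1 - H) * (2 * Real.exp (-2)) := by positivity
  have h1 : 2 * t * Real.exp (-2 * t) ≤ 1 - Real.exp (-2 * t) := by
    have h2 := Real.add_one_le_exp (2 * t)
    have hne : Real.exp (-2 * t) * Real.exp (2 * t) = 1 := by
      rw [← Real.exp_add]; norm_num
    nlinarith [Real.exp_pos (-2 * t)]
  have h2 : Real.exp (-2 : ℝ) ≤ Real.exp (-2 * t) := by
    apply Real.exp_le_exp.2; linarith [ht.2]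
  have hkey : (1 - H) * (2 * Real.exp (-2)) * t ≤ 1 - u ^ 2 := by
    nlinarith [ht.1, Real.exp_pos (-2 * t), mul_nonneg h1H.le ht.1.le]
  have hs : Real.sqrt ((1 - H) * (2 * Real.exp (-2))) * Real.sqrt t
      ≤ Real.sqrt (1 - u ^ 2) := sqrt_mul_sqrt_le hc.le hkey
  have hd0 : 0 < Real.sqrt ((1 - H) * (2 * Real.exp (-2))) * Real.sqrt t :=
    mul_pos (Real.sqrt_pos.2 hc) (Real.sqrt_pos.2 ht.1)
  have hDle : Real.sqrt ((1 - H) * (2 * Real.exp (-2))) * Real.sqrt t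
      ≤ Real.cosh t * Real.sqrt (1 - u ^ 2) := by
    calc Real.sqrt ((1 - H) * (2 * Real.exp (-2))) * Real.sqrt t
        ≤ Real.sqrt (1 - u ^ 2) := hs
      _ ≤ Real.cosh t * Real.sqrt (1 - u ^ 2) :=
          le_mul_of_one_le_left (Real.sqrt_nonneg _) (Real.one_le_cosh t)
  have : ffB H t ≤ 1 / (Real.sqrt ((1 - H) * (2 * Real.exp (-2))) * Real.sqrt t) :=
    div_le_div₀ zero_le_one hu1.le hd0 hDle
  calc ffB H t ≤ 1 / (Real.sqrt ((1 - H) * (2 * Real.exp (-2))) * Real.sqrt t) := this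
    _ = (Real.sqrt ((1 - H) * (2 * Real.exp (-2))))⁻¹ * (Real.sqrt t)⁻¹ := by
        rw [one_div, mul_inv]

lemma ffB_upper_Ioi {H t : ℝ} (hH0 : 0 ≤ H) (hH1 : H < 1) (ht : t ∈ Set.Ioi (1:ℝ)) :
    ffB H t ≤ (Real.sqrt ((1 - H) * (1 - Real.exp (-2))))⁻¹ * (2 * Real.exp (-t)) := by
  have ht1 : (1:ℝ) < t := ht
  have ht0 : (0:ℝ) < t := by linarith
  obtain ⟨huH, hu0, hu1, husq⟩ := uB_facts hH0 hH1 ht0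
  set u := H + (1 - H) * Real.exp (-2 * t) with hu
  have h1H : 0 < 1 - H := by linarith
  have he2 : Real.exp (-2:ℝ) < 1 := by rw [Real.exp_lt_one_iff]; norm_num
  have hd : (0:ℝ) < (1 - H) * (1 - Real.exp (-2)) := by
    apply mul_pos h1H; linarith
  have hmon : Real.exp (-2 * t) ≤ Real.exp (-2 : ℝ) := by
    apply Real.exp_le_exp.2; linarith
  have hkey : (1 - H) * (1 - Real.exp (-2)) ≤ 1 - u ^ 2 := by
    nlinarith [Real.exp_pos (-2 * t)]
  have hs : Real.sqrt ((1 - H) * (1 - Real.exp (-2))) ≤ Real.sqrt (1 - u ^ 2) :=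
    Real.sqrt_le_sqrt hkey
  have hcosh : Real.exp t / 2 ≤ Real.cosh t := by
    rw [Real.cosh_eq]; nlinarith [Real.exp_pos (-t)]
  have hd0 : 0 < Real.exp t / 2 * Real.sqrt ((1 - H) * (1 - Real.exp (-2))) := by
    positivity
  have hDle : Real.exp t / 2 * Real.sqrt ((1 - H) * (1 - Real.exp (-2)))
      ≤ Real.cosh t * Real.sqrt (1 - u ^ 2) :=
    mul_le_mul hcosh hs (Real.sqrt_nonneg _) (Real.cosh_pos t).le
  have h1 : ffB H t ≤ 1 / (Real.exp t / 2 * Real.sqrt ((1 - H) * (1 - Real.exp (-2)))) :=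
    div_le_div₀ zero_le_one hu1.le hd0 hDle
  calc ffB H t ≤ 1 / (Real.exp t / 2 * Real.sqrt ((1 - H) * (1 - Real.exp (-2)))) := h1
    _ = (Real.sqrt ((1 - H) * (1 - Real.exp (-2))))⁻¹ * (2 * Real.exp (-t)) := by
        rw [Real.exp_neg t]
        field_simp

lemma integrableOn_inv_sqrt : IntegrableOn (fun t : ℝ => (Real.sqrt t)⁻¹) (Set.Ioc 0 1) volume := by
  have h : IntegrableOn (fun t : ℝ => t ^ (-(1/2):ℝ)) (Set.Ioc 0 1) volume := by
    rw [← intervalIntegrable_iff_integrableOn_Ioc_of_le zero_le_one]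
    exact intervalIntegral.intervalIntegrable_rpow' (by norm_num)
  apply h.congr_fun ?_ measurableSet_Ioc
  intro x hx
  show x ^ (-(1/2):ℝ) = (Real.sqrt x)⁻¹
  rw [Real.sqrt_eq_rpow, ← Real.rpow_neg hx.1.le]

lemma integral_inv_sqrt : ∫ t in Set.Ioc (0:ℝ) 1, (Real.sqrt t)⁻¹ = 2 := by
  have h1 : ∫ t in Set.Ioc (0:ℝ) 1, (Real.sqrt t)⁻¹
      = ∫ t in Set.Ioc (0:ℝ) 1, t ^ (-(1/2):ℝ) := by
    apply setIntegral_congr_fun measurableSet_Ioc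
    intro x hx
    show (Real.sqrt x)⁻¹ = x ^ (-(1/2):ℝ)
    rw [Real.sqrt_eq_rpow, ← Real.rpow_neg hx.1.le]
  rw [h1, ← intervalIntegral.integral_of_le zero_le_one,
    integral_rpow (Or.inl (by norm_num))]
  rw [Real.zero_rpow (by norm_num), Real.one_rpow]
  norm_num

lemma ffB_measurable (H : ℝ) : Measurable (ffB H) := by
  unfold ffB
  apply Measurable.div
  · fun_prop
  · exact (Real.continuous_cosh.mul (Real.continuous_sqrt.comp (by continuity))).measurable

lemma ffB_integrableOn {H : ℝ} (hH0 : 0 ≤ H) (hH1 : H < 1) :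
    IntegrableOn (ffB H) (Set.Ioi 0) volume := by
  have hmeas : AEStronglyMeasurable (ffB H) volume := (ffB_measurable H).aestronglyMeasurable
  have h1 : IntegrableOn (ffB H) (Set.Ioc 0 1) volume := by
    apply Integrable.mono'
      (integrableOn_inv_sqrt.const_mul (Real.sqrt ((1 - H) * (2 * Real.exp (-2))))⁻¹)
      hmeas.restrict
    filter_upwards [ae_restrict_mem measurableSet_Ioc] with t ht
    rw [Real.norm_eq_abs, abs_of_nonneg (ffB_nonneg hH0 hH1 t)]
    exact ffB_upper_Ioc hH0 hH1 ht
  have h2 : IntegrableOn (ffB H) (Set.Ioi 1) volume := by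
    have he : IntegrableOn (fun t : ℝ => Real.exp (-t)) (Set.Ioi 1) volume := by
      simpa using exp_neg_integrableOn_Ioi 1 one_pos
    apply Integrable.mono'
      (((he.const_mul 2).const_mul (Real.sqrt ((1 - H) * (1 - Real.exp (-2))))⁻¹))
      hmeas.restrict
    filter_upwards [ae_restrict_mem measurableSet_Ioi] with t ht
    rw [Real.norm_eq_abs, abs_of_nonneg (ffB_nonneg hH0 hH1 t)]
    exact ffB_upper_Ioi hH0 hH1 ht
  rw [← Set.Ioc_union_Ioi_eq_Ioi (zero_le_one (α := ℝ))]
  exact h1.union h2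

end Aux

/-- `B(H) → +∞` as `H → 1⁻`, where
`B(H) = ∫_0^∞ (H+(1-H)e^{-2t})/(cosh(t)√(1-(H+(1-H)e^{-2t})²)) dt` for `H ∈ [0,1)`. -/
theorem stmt_14 (B : ℝ → ℝ)
    (hB : ∀ H ∈ Set.Ico (0 : ℝ) 1, B H = ∫ t in Set.Ioi (0 : ℝ),
      (H + (1 - H) * Real.exp (-2 * t)) /
        (Real.cosh t * Real.sqrt (1 - (H + (1 - H) * Real.exp (-2 * t)) ^ 2))) :
    Tendsto B (nhdsWithin 1 (Set.Ico 0 1)) atTop := by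
  have key : ∀ H ∈ Set.Ico (0:ℝ) 1,
      H / (2 * Real.cosh 1 * Real.sqrt (1 - H)) * 2 ≤ B H := by
    intro H hH
    obtain ⟨hH0, hH1⟩ := hH
    have hBH : B H = ∫ t in Set.Ioi (0:ℝ), ffB H t := hB H ⟨hH0, hH1⟩
    rw [hBH]
    have step1 : ∫ t in Set.Ioc (0:ℝ) 1, ffB H t ≤ ∫ t in Set.Ioi (0:ℝ), ffB H t := by
      apply setIntegral_mono_set (ffB_integrableOn hH0 hH1)
      · exact ae_of_all _ fun t => ffB_nonneg hH0 hH1 t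
      · exact HasSubset.Subset.eventuallyLE Set.Ioc_subset_Ioi_self
    have step2 : ∫ t in Set.Ioc (0:ℝ) 1,
        H / (2 * Real.cosh 1 * Real.sqrt (1 - H)) * (Real.sqrt t)⁻¹
        ≤ ∫ t in Set.Ioc (0:ℝ) 1, ffB H t := by
      apply setIntegral_mono_on
        (integrableOn_inv_sqrt.const_mul _)
        ((ffB_integrableOn hH0 hH1).mono_set Set.Ioc_subset_Ioi_self)
        measurableSet_Ioc
      intro t ht
      exact ffB_lower hH0 hH1 ht
    have step3 : ∫ t in Set.Ioc (0:ℝ) 1,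
        H / (2 * Real.cosh 1 * Real.sqrt (1 - H)) * (Real.sqrt t)⁻¹
        = H / (2 * Real.cosh 1 * Real.sqrt (1 - H)) * 2 := by
      rw [MeasureTheory.integral_const_mul, integral_inv_sqrt]
    linarith
  have h2 : Tendsto (fun H : ℝ => (2 * Real.cosh 1 * Real.sqrt (1 - H))⁻¹)
      (nhdsWithin 1 (Set.Ico 0 1)) atTop := by
    apply Filter.Tendsto.inv_tendsto_nhdsGT_zero
    rw [tendsto_nhdsWithin_iff]
    constructor
    · have hc : Tendsto (fun H : ℝ => 2 * Real.cosh 1 * Real.sqrt (1 - H)) (nhds 1)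
          (nhds (2 * Real.cosh 1 * Real.sqrt (1 - 1))) :=
        Continuous.tendsto (by continuity) 1
      simp only [sub_self, Real.sqrt_zero, mul_zero] at hc
      exact hc.mono_left nhdsWithin_le_nhds
    · filter_upwards [eventually_mem_nhdsWithin] with H hH
      have h1H : 0 < 1 - H := by linarith [hH.2]
      have : 0 < 2 * Real.cosh 1 * Real.sqrt (1 - H) := by
        have := Real.cosh_pos (1:ℝ)
        positivity
      exact this
  apply tendsto_atTop_mono' _ ?_ h2
  filter_upwards [eventually_mem_nhdsWithin,
    eventually_nhdsWithin_of_eventually_nhds (eventually_ge_nhds (by norm_num : (1/2:ℝ) < 1))]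
    with H hH hH2
  have h1H : 0 < 1 - H := by linarith [hH.2]
  have hD : 0 < 2 * Real.cosh 1 * Real.sqrt (1 - H) := by
    have := Real.cosh_pos (1:ℝ)
    positivity
  calc (2 * Real.cosh 1 * Real.sqrt (1 - H))⁻¹
      = 1 / (2 * Real.cosh 1 * Real.sqrt (1 - H)) := (one_div _).symm
    _ ≤ H * 2 / (2 * Real.cosh 1 * Real.sqrt (1 - H)) := by
        gcongr
        linarith
    _ = H / (2 * Real.cosh 1 * Real.sqrt (1 - H)) * 2 := by ring
    _ ≤ B H := key H hH
end

section
/- For every $H \in [0,1)$ and every $t > 0$ one has $H(\coth(2t) - \operatorname{csch}(2t)) \le H + (1-H)e^{-2t}$, and consequently $\displaystyle\int_0^{\infty} \frac{H(\coth(2t) - \operatorname{csch}(2t))}{\cosh(t)\sqrt{1 - H^2(\coth(2t)-\operatorname{csch}(2t))^2}}\,dt \le \int_0^{\infty} \frac{H + (1-H)e^{-2t}}{\cosh(t)\sqrt{1 - (H+(1-H)e^{-2t})^2}}\,dt = B(H)$. -/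
open Real MeasureTheory Set

lemma aux_v {t : ℝ} (ht : 0 < t) :
    0 ≤ coth (2*t) - csch (2*t) ∧ coth (2*t) - csch (2*t) ≤ 1 := by
  have hs : 0 < Real.sinh (2*t) := Real.sinh_pos_iff.2 (by linarith)
  have hc : 1 ≤ Real.cosh (2*t) := Real.one_le_cosh _
  have he : Real.cosh (2*t) - Real.sinh (2*t) = Real.exp (-(2*t)) := Real.cosh_sub_sinh _
  have he1 : Real.exp (-(2*t)) ≤ 1 := Real.exp_le_one_iff.2 (by linarith)
  have hv : coth (2*t) - csch (2*t) = (Real.cosh (2*t) - 1) / Real.sinh (2*t) := by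
    unfold coth csch; rw [div_sub_div_same]
  rw [hv]
  exact ⟨div_nonneg (by linarith) hs.le, by rw [div_le_one hs]; linarith⟩

/-- For every `H ∈ [0,1)` and every `t > 0`,
`H(coth(2t)-csch(2t)) ≤ H + (1-H)e^{-2t}`, and consequently
`∫_0^∞ H(coth(2t)-csch(2t))/(cosh(t)√(1-H²(coth(2t)-csch(2t))²)) dt ≤ B(H)`, where
`B(H) = ∫_0^∞ (H+(1-H)e^{-2t})/(cosh(t)√(1-(H+(1-H)e^{-2t})²)) dt`. -/
theorem stmt_17 (H : ℝ) (hH : H ∈ Set.Ico (0 : ℝ) 1) :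
    (∀ t > (0 : ℝ),
      H * (coth (2 * t) - csch (2 * t)) ≤ H + (1 - H) * Real.exp (-2 * t)) ∧
    (∫ t in Set.Ioi (0 : ℝ),
      H * (coth (2 * t) - csch (2 * t)) /
        (Real.cosh t * Real.sqrt (1 - H ^ 2 * (coth (2 * t) - csch (2 * t)) ^ 2)))
      ≤ ∫ t in Set.Ioi (0 : ℝ),
        (H + (1 - H) * Real.exp (-2 * t)) /
          (Real.cosh t * Real.sqrt (1 - (H + (1 - H) * Real.exp (-2 * t)) ^ 2)) := by
  obtain ⟨hH0, hH1⟩ := hH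
  set u : ℝ → ℝ := fun t => H + (1 - H) * Real.exp (-2 * t) with hu
  have hu0 : ∀ t, 0 ≤ u t := fun t =>
    add_nonneg hH0 (mul_nonneg (by linarith) (Real.exp_pos _).le)
  have hu1 : ∀ t > (0:ℝ), u t < 1 := by
    intro t ht
    have : Real.exp (-2 * t) < 1 := Real.exp_lt_one_iff.2 (by linarith)
    simp only [hu]; nlinarith
  have hpt : ∀ t > (0:ℝ), H * (coth (2 * t) - csch (2 * t)) ≤ u t := by
    intro t ht
    obtain ⟨hv0, hv1⟩ := aux_v ht
    have h1 : H * (coth (2*t) - csch (2*t)) ≤ H := by nlinarith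
    have h2 : H ≤ u t := by simp only [hu]; nlinarith [Real.exp_pos (-2*t)]
    linarith
  refine ⟨hpt, ?_⟩
  set g : ℝ → ℝ := fun t => u t / (Real.cosh t * Real.sqrt (1 - u t ^ 2)) with hg
  set f : ℝ → ℝ := fun t =>
    H * (coth (2 * t) - csch (2 * t)) /
      (Real.cosh t * Real.sqrt (1 - H ^ 2 * (coth (2 * t) - csch (2 * t)) ^ 2)) with hf
  have hexp2 : Real.exp (-2:ℝ) < 1 := Real.exp_lt_one_iff.2 (by norm_num)
  set k : ℝ := (1 - H) * (1 - Real.exp (-2)) with hkdef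
  have hk : (0:ℝ) < k := by rw [hkdef]; nlinarith
  have hsk : (0:ℝ) < Real.sqrt k := Real.sqrt_pos.2 hk
  have hlow : ∀ t ∈ Set.Ioc (0:ℝ) 1, k * t ≤ 1 - u t ^ 2 := by
    rintro t ⟨ht0, ht1⟩
    have hconv := convexOn_exp.2 (Set.mem_univ (0:ℝ)) (Set.mem_univ (-2:ℝ))
      (by linarith : (0:ℝ) ≤ 1 - t) ht0.le (by ring)
    simp only [smul_eq_mul, mul_zero, Real.exp_zero, zero_add, mul_one] at hconv
    have he : Real.exp (-2 * t) ≤ (1 - t) + t * Real.exp (-2) := by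
      have h : t * (-2:ℝ) = -2 * t := by ring
      rw [h] at hconv; linarith
    have h1u : k * t ≤ 1 - u t := by simp only [hu, hkdef]; nlinarith
    nlinarith [hu0 t, hu1 t ht0]
  have hlow2 : ∀ t ∈ Set.Ioi (1:ℝ), k ≤ 1 - u t ^ 2 := by
    intro t ht
    simp only [Set.mem_Ioi] at ht
    have he : Real.exp (-2 * t) ≤ Real.exp (-2) := Real.exp_le_exp.2 (by linarith)
    have h1u : k ≤ 1 - u t := by simp only [hu, hkdef]; nlinarith
    nlinarith [hu0 t, hu1 t (by linarith)]
  have hmeas : Measurable g := by simp only [hg, hu]; fun_prop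
  have hgnn : ∀ t, 0 ≤ g t := fun t =>
    div_nonneg (hu0 t) (mul_nonneg (Real.cosh_pos t).le (Real.sqrt_nonneg _))
  have hint : IntegrableOn g (Set.Ioi (0:ℝ)) := by
    rw [← Set.Ioc_union_Ioi_eq_Ioi (zero_le_one : (0:ℝ) ≤ 1)]
    refine IntegrableOn.union ?_ ?_
    · have hb : IntegrableOn (fun t : ℝ => (Real.sqrt k)⁻¹ * t ^ (-(1/2) : ℝ))
          (Set.Ioc 0 1) := by
        have h := intervalIntegral.intervalIntegrable_rpow' (r := -(1/2)) (by norm_num) (a := (0:ℝ)) (b := 1)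
        rw [intervalIntegrable_iff_integrableOn_Ioc_of_le zero_le_one] at h
        exact h.const_mul _
      refine Integrable.mono' hb hmeas.aestronglyMeasurable.restrict ?_
      filter_upwards [ae_restrict_mem measurableSet_Ioc] with t ht
      obtain ⟨ht0, ht1⟩ := ht
      rw [Real.norm_of_nonneg (hgnn t)]
      have hsq : Real.sqrt (k * t) ≤ Real.sqrt (1 - u t ^ 2) :=
        Real.sqrt_le_sqrt (hlow t ⟨ht0, ht1⟩)
      have hs1 : 0 < Real.sqrt (k * t) := Real.sqrt_pos.2 (mul_pos hk ht0)
      have hcosh : 1 ≤ Real.cosh t := Real.one_le_cosh t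
      have hden : Real.sqrt (k * t) ≤ Real.cosh t * Real.sqrt (1 - u t ^ 2) := by
        nlinarith [Real.sqrt_nonneg (1 - u t ^ 2)]
      have h1 : g t ≤ 1 / Real.sqrt (k * t) := by
        simp only [hg]
        exact div_le_div₀ (by norm_num) (by linarith [hu1 t ht0]) hs1 hden
      have h2 : (1:ℝ) / Real.sqrt (k * t) = (Real.sqrt k)⁻¹ * t ^ (-(1/2) : ℝ) := by
        rw [Real.sqrt_mul hk.le, Real.rpow_neg ht0.le, ← Real.sqrt_eq_rpow, one_div, mul_inv]
      rw [← h2]; exact h1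
    · have hb : IntegrableOn (fun t : ℝ => 2 * (Real.sqrt k)⁻¹ * Real.exp (-1 * t))
          (Set.Ioi 1) := (exp_neg_integrableOn_Ioi 1 one_pos).const_mul _
      refine Integrable.mono' hb hmeas.aestronglyMeasurable.restrict ?_
      filter_upwards [ae_restrict_mem measurableSet_Ioi] with t ht
      have ht1 : (1:ℝ) < t := ht
      have ht0 : (0:ℝ) < t := by linarith
      rw [Real.norm_of_nonneg (hgnn t)]
      have hsq : Real.sqrt k ≤ Real.sqrt (1 - u t ^ 2) := Real.sqrt_le_sqrt (hlow2 t ht)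
      have hcosh : Real.exp t / 2 ≤ Real.cosh t := by
        rw [Real.cosh_eq]; nlinarith [Real.exp_pos (-t)]
      have hden : Real.exp t / 2 * Real.sqrt k ≤ Real.cosh t * Real.sqrt (1 - u t ^ 2) :=
        mul_le_mul hcosh hsq hsk.le (Real.cosh_pos t).le
      have hpos : 0 < Real.exp t / 2 * Real.sqrt k := by positivity
      have h1 : g t ≤ 1 / (Real.exp t / 2 * Real.sqrt k) := by
        simp only [hg]
        exact div_le_div₀ (by norm_num) (by linarith [hu1 t ht0]) hpos hden
      have h2 : (1:ℝ) / (Real.exp t / 2 * Real.sqrt k)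
          = 2 * (Real.sqrt k)⁻¹ * Real.exp (-1 * t) := by
        rw [neg_one_mul, Real.exp_neg]
        field_simp
      rw [← h2]; exact h1
  refine integral_mono_of_nonneg ?_ hint ?_
  · filter_upwards [ae_restrict_mem measurableSet_Ioi] with t ht
    have ht0 : (0:ℝ) < t := ht
    obtain ⟨hv0, hv1⟩ := aux_v ht0
    exact div_nonneg (mul_nonneg hH0 hv0)
      (mul_nonneg (Real.cosh_pos t).le (Real.sqrt_nonneg _))
  · filter_upwards [ae_restrict_mem measurableSet_Ioi] with t ht
    have ht0 : (0:ℝ) < t := ht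
    obtain ⟨hv0, hv1⟩ := aux_v ht0
    set v : ℝ := coth (2 * t) - csch (2 * t) with hvdef
    have hnum : H * v ≤ u t := hpt t ht0
    have hHv0 : 0 ≤ H * v := mul_nonneg hH0 hv0
    have hsq2 : H ^ 2 * v ^ 2 ≤ u t ^ 2 := by nlinarith [hu0 t]
    have hsqle : Real.sqrt (1 - u t ^ 2) ≤ Real.sqrt (1 - H ^ 2 * v ^ 2) :=
      Real.sqrt_le_sqrt (by linarith)
    have hu1t := hu1 t ht0
    have hspos : 0 < Real.sqrt (1 - u t ^ 2) :=
      Real.sqrt_pos.2 (by nlinarith [hu0 t])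
    have hdpos : 0 < Real.cosh t * Real.sqrt (1 - u t ^ 2) :=
      mul_pos (Real.cosh_pos t) hspos
    have hdle : Real.cosh t * Real.sqrt (1 - u t ^ 2)
        ≤ Real.cosh t * Real.sqrt (1 - H ^ 2 * v ^ 2) :=
      mul_le_mul_of_nonneg_left hsqle (Real.cosh_pos t).le
    exact div_le_div₀ (hu0 t) hnum hdpos hdle
end

section
/- For every $\rho > 0$, the function $t \mapsto \dfrac{\sinh(\rho)}{\sqrt{\sinh^2(t+\rho) - \sinh^2(\rho)}}$ is integrable on $(0,\infty)$ and $\displaystyle\int_0^{\infty} \frac{\sinh(\rho)}{\sqrt{\sinh^2(t+\rho) - \sinh^2(\rho)}}\,dt < \frac{\pi}{2}$. -/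
/-!
Writing `s = t + ρ`, the integrand `sinh ρ / √(sinh² s - sinh² ρ)` is strictly smaller than
`sinh ρ cosh s / (sinh s √(sinh² s - sinh² ρ))`, because `sinh s < cosh s`. The latter is the
derivative of `t ↦ arccos (sinh ρ / sinh (t + ρ))`, which increases from `0` at `t = 0` to `π / 2`
at infinity.
-/

open Real MeasureTheory Set Filter Topology

theorem setIntegral_lt_setIntegral_of_forall_lt {α : Type*} [MeasurableSpace α]
    {μ : Measure α} {s : Set α} {f g : α → ℝ} (hs : MeasurableSet s) (hμs : μ s ≠ 0)
    (hf : IntegrableOn f s μ) (hg : IntegrableOn g s μ) (hfg : ∀ x ∈ s, f x < g x) :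
    ∫ x in s, f x ∂μ < ∫ x in s, g x ∂μ := by
  rw [← sub_pos, ← integral_sub hg hf, setIntegral_pos_iff_support_of_nonneg_ae
    (ae_restrict_of_forall_mem hs fun x hx => (sub_pos.2 (hfg x hx)).le) (hg.sub hf)]
  have hs_sub : s ⊆ Function.support (fun x => g x - f x) ∩ s :=
    fun x hx => ⟨(sub_pos.2 (hfg x hx)).ne', hx⟩
  exact (pos_iff_ne_zero.2 hμs).trans_le (measure_mono hs_sub)

theorem integrableOn_Ioi_and_integral_lt_of_lt_deriv {f g g' : ℝ → ℝ} {a l : ℝ}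
    (hcont : ContinuousWithinAt g (Ici a) a) (hderiv : ∀ x ∈ Ioi a, HasDerivAt g (g' x) x)
    (hg : Tendsto g atTop (𝓝 l)) (hf : AEStronglyMeasurable f (volume.restrict (Ioi a)))
    (hf₀ : ∀ x ∈ Ioi a, 0 ≤ f x) (hfg : ∀ x ∈ Ioi a, f x < g' x) :
    IntegrableOn f (Ioi a) ∧ ∫ x in Ioi a, f x < l - g a := by
  have hg'₀ : ∀ x ∈ Ioi a, 0 ≤ g' x := fun x hx => (hf₀ x hx).trans (hfg x hx).le
  have hg'_int : IntegrableOn g' (Ioi a) := integrableOn_Ioi_deriv_of_nonneg hcont hderiv hg'₀ hg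
  have hf_int : IntegrableOn f (Ioi a) := by
    refine hg'_int.mono' hf (ae_restrict_of_forall_mem measurableSet_Ioi fun x hx => ?_)
    rw [norm_of_nonneg (hf₀ x hx)]
    exact (hfg x hx).le
  refine ⟨hf_int, ?_⟩
  rw [← integral_Ioi_of_hasDerivAt_of_tendsto hcont hderiv hg'_int hg]
  exact setIntegral_lt_setIntegral_of_forall_lt measurableSet_Ioi (by simp) hf_int hg'_int hfg

theorem hasDerivAt_arccos_const_div {c y : ℝ} (hcy : |c| < y) :
    HasDerivAt (fun y => arccos (c / y)) (c / (y * √(y ^ 2 - c ^ 2))) y := by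
  have hy : 0 < y := (abs_nonneg c).trans_lt hcy
  have hcy₁ : c / y < 1 := (div_lt_one hy).2 (lt_of_abs_lt hcy)
  have hcy₂ : -1 < c / y := by rw [lt_div_iff₀ hy]; linarith [neg_lt_of_abs_lt hcy]
  have hsqrt : √(1 - (c / y) ^ 2) = √(y ^ 2 - c ^ 2) / y := by
    rw [show 1 - (c / y) ^ 2 = (y ^ 2 - c ^ 2) / y ^ 2 by field_simp, sqrt_div' _ (sq_nonneg y),
      sqrt_sq hy.le]
  have hdiv : HasDerivAt (fun y => c / y) (-c / y ^ 2) y := by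
    simpa [div_eq_mul_inv] using (hasDerivAt_inv hy.ne').const_mul c
  have h : HasDerivAt (arccos ∘ fun y => c / y) (-(1 / √(1 - (c / y) ^ 2)) * (-c / y ^ 2)) y :=
    (hasDerivAt_arccos hcy₂.ne' hcy₁.ne).comp y hdiv
  refine h.congr_deriv ?_
  rw [hsqrt]
  field_simp

theorem tendsto_sinh_atTop : Tendsto sinh atTop atTop :=
  tendsto_atTop_atTop_of_monotone sinh_strictMono.monotone fun b => ⟨arsinh b, (sinh_arsinh b).ge⟩

section Catenoid

variable {ρ t : ℝ}

theorem abs_sinh_lt_sinh_add (hρ : 0 ≤ ρ) (ht : 0 < t) : |sinh ρ| < sinh (t + ρ) := by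
  rw [abs_of_nonneg (sinh_nonneg_iff.2 hρ)]
  exact sinh_lt_sinh.2 (by linarith)

theorem hasDerivAt_arccos_sinh_div_sinh_add (hρ : 0 ≤ ρ) (ht : 0 < t) :
    HasDerivAt (fun t => arccos (sinh ρ / sinh (t + ρ)))
      (sinh ρ / (sinh (t + ρ) * √(sinh (t + ρ) ^ 2 - sinh ρ ^ 2)) * cosh (t + ρ)) t := by
  have hsinh : HasDerivAt (fun t => sinh (t + ρ)) (cosh (t + ρ)) t := by
    simpa using ((hasDerivAt_id t).add_const ρ).sinh
  have h : HasDerivAt ((fun y => arccos (sinh ρ / y)) ∘ fun t => sinh (t + ρ)) _ t :=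
    (hasDerivAt_arccos_const_div (abs_sinh_lt_sinh_add hρ ht)).comp t hsinh
  exact h

theorem tendsto_arccos_sinh_div_sinh_add_atTop :
    Tendsto (fun t => arccos (sinh ρ / sinh (t + ρ))) atTop (𝓝 (π / 2)) := by
  have h : Tendsto (fun t => sinh ρ / sinh (t + ρ)) atTop (𝓝 0) :=
    tendsto_const_nhds.div_atTop
      (tendsto_sinh_atTop.comp (tendsto_atTop_add_const_right _ ρ tendsto_id))
  have h' := (continuous_arccos.tendsto 0).comp h
  rwa [arccos_zero] at h'

theorem sinh_div_sqrt_lt (hρ : 0 < ρ) (ht : 0 < t) :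
    sinh ρ / √(sinh (t + ρ) ^ 2 - sinh ρ ^ 2) <
      sinh ρ / (sinh (t + ρ) * √(sinh (t + ρ) ^ 2 - sinh ρ ^ 2)) * cosh (t + ρ) := by
  have hs : |sinh ρ| < sinh (t + ρ) := abs_sinh_lt_sinh_add hρ.le ht
  have hρs : 0 < sinh ρ := sinh_pos_iff.2 hρ
  have hsq : sinh ρ ^ 2 < sinh (t + ρ) ^ 2 := sq_lt_sq' (neg_lt_of_abs_lt hs) (lt_of_abs_lt hs)
  have hS : 0 < √(sinh (t + ρ) ^ 2 - sinh ρ ^ 2) := sqrt_pos.2 (sub_pos.2 hsq)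
  have hy : 0 < sinh (t + ρ) := (abs_nonneg _).trans_lt hs
  rw [div_mul_eq_mul_div, div_lt_div_iff₀ hS (mul_pos hy hS)]
  nlinarith [mul_pos (mul_pos hρs hS) (sub_pos.2 (sinh_lt_cosh (t + ρ)))]

end Catenoid

/-- For every `ρ > 0`, the function `t ↦ sinh(ρ)/√(sinh²(t+ρ) - sinh²(ρ))` is
integrable on `(0,∞)` and `∫_0^∞ sinh(ρ)/√(sinh²(t+ρ) - sinh²(ρ)) dt < π/2`. -/
theorem stmt_18 (ρ : ℝ) (hρ : 0 < ρ) :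
    IntegrableOn (fun t : ℝ =>
      Real.sinh ρ / Real.sqrt (Real.sinh (t + ρ) ^ 2 - Real.sinh ρ ^ 2))
      (Set.Ioi 0) ∧
    (∫ t in Set.Ioi (0 : ℝ),
      Real.sinh ρ / Real.sqrt (Real.sinh (t + ρ) ^ 2 - Real.sinh ρ ^ 2))
      < Real.pi / 2 := by
  have hcont : ContinuousWithinAt (fun t => arccos (sinh ρ / sinh (t + ρ))) (Ici 0) 0 := by
    have : sinh (0 + ρ) ≠ 0 := by simpa using hρ.ne'
    fun_prop (disch := exact this)
  have hmeas : Measurable fun t => sinh ρ / √(sinh (t + ρ) ^ 2 - sinh ρ ^ 2) := by fun_prop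
  have hbound := integrableOn_Ioi_and_integral_lt_of_lt_deriv hcont
    (fun _ => hasDerivAt_arccos_sinh_div_sinh_add hρ.le)
    tendsto_arccos_sinh_div_sinh_add_atTop hmeas.aestronglyMeasurable
    (fun _ _ => div_nonneg (sinh_nonneg_iff.2 hρ.le) (sqrt_nonneg _))
    (fun _ => sinh_div_sqrt_lt hρ)
  simpa [div_self (sinh_pos_iff.2 hρ).ne'] using hbound
end
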